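/- arXiv:2511.13484 — 4 statements merged into one kernel-verified Lean document; each statement's English description precedes it below -/
import Mathlib

section
/- For z, w in the open unit disk with z ≠ w, the point c = (|zw|^2 - 1 + sqrt((1-|z|^2)(1-|w|^2)|1 - conj(w) z|^2)) / (conj(zw)(z+w) - (conj(z)+conj(w))) (when the denominator is nonzero) satisfies the pseudo-hyperbolic distance equality |(c-z)/(1-conj(z)c)| = |(c-w)/(1-conj(w)c)|, i.e. c is hyperbolically equidistant from z and w. -/
/-!
Since `|1 - z̄c|² - |c - z|² = (1 - |z|²)(1 - |c|²)`, the point `c` is pseudo-hyperbolically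
equidistant from `z` and `w` as soon as `(1 - |z|²)|1 - w̄c|² = (1 - |w|²)|1 - z̄c|²`.
Writing `c = N / D` with `N = |zw|² - 1 + S` real, this becomes, after clearing `|D|²`, a polynomial
identity in `z, z̄, w, w̄, S` whose two sides differ by
`(|w|² - |z|²)(S² - (1 - |z|²)(1 - |w|²)|1 - w̄z|²)`, which vanishes by the choice of `S`.
-/

open Complex ComplexConjugate

theorem div_eq_div_of_mul_eq_mul {K : Type*} [Field K] {a b c d : K} (h : a * d = c * b)
    (hb : b = 0 → a ≠ 0) (hd : d = 0 → c ≠ 0) : a / b = c / d := by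
  by_cases hb0 : b = 0
  · have hd0 : d = 0 := by simpa [hb0, hb hb0] using h
    simp [hb0, hd0]
  by_cases hd0 : d = 0
  · exact absurd (by simpa [hd0, hd hd0] using h.symm) hb0
  exact (div_eq_div_iff hb0 hd0).mpr h

theorem one_sub_conj_mul_self_ne_zero {z : ℂ} (hz : ‖z‖ < 1) : 1 - conj z * z ≠ 0 := by
  rw [conj_mul', sub_ne_zero]
  norm_cast
  nlinarith [norm_nonneg z]

theorem sq_norm_one_sub_conj_mul_sub_sq_norm_sub (z c : ℂ) :
    ‖1 - conj z * c‖ ^ 2 - ‖c - z‖ ^ 2 = (1 - ‖z‖ ^ 2) * (1 - ‖c‖ ^ 2) := by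
  apply ofReal_injective
  push_cast
  simp only [← mul_conj', map_sub, map_mul, map_one, conj_conj]
  ring

section Equidistance

variable {z w c : ℂ}

theorem cross_sq_norm_eq_of_weighted_eq
    (h : (1 - ‖z‖ ^ 2) * ‖1 - conj w * c‖ ^ 2 = (1 - ‖w‖ ^ 2) * ‖1 - conj z * c‖ ^ 2) :
    ‖c - z‖ ^ 2 * ‖1 - conj w * c‖ ^ 2 = ‖c - w‖ ^ 2 * ‖1 - conj z * c‖ ^ 2 := by
  linear_combination -(1 - ‖c‖ ^ 2) * h
    - ‖1 - conj w * c‖ ^ 2 * sq_norm_one_sub_conj_mul_sub_sq_norm_sub z c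
    + ‖1 - conj z * c‖ ^ 2 * sq_norm_one_sub_conj_mul_sub_sq_norm_sub w c

theorem norm_mobius_eq_of_weighted_eq (hz : ‖z‖ < 1) (hw : ‖w‖ < 1)
    (h : (1 - ‖z‖ ^ 2) * ‖1 - conj w * c‖ ^ 2 = (1 - ‖w‖ ^ 2) * ‖1 - conj z * c‖ ^ 2) :
    ‖(c - z) / (1 - conj z * c)‖ = ‖(c - w) / (1 - conj w * c)‖ := by
  -- If a denominator vanishes, the cross identity forces the other one to vanish too,
  -- so that both sides are the junk value `x / 0 = 0`.
  have numerator_ne_zero {a : ℂ} (ha : ‖a‖ < 1) : ‖1 - conj a * c‖ = 0 → ‖c - a‖ ≠ 0 := by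
    intro h0 h1
    rw [norm_eq_zero, sub_eq_zero] at h1
    exact one_sub_conj_mul_self_ne_zero ha (by rwa [h1, norm_eq_zero] at h0)
  rw [norm_div, norm_div]
  refine div_eq_div_of_mul_eq_mul ?_ (numerator_ne_zero hz) (numerator_ne_zero hw)
  rw [← sq_eq_sq₀ (by positivity) (by positivity), mul_pow, mul_pow]
  exact cross_sq_norm_eq_of_weighted_eq h

end Equidistance

section Midpoint

variable (z w : ℂ) (S : ℝ)

theorem weighted_eq_numerator
    (hS : S ^ 2 = (1 - ‖z‖ ^ 2) * (1 - ‖w‖ ^ 2) * ‖1 - conj w * z‖ ^ 2) :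
    let N : ℂ := ((‖z * w‖ ^ 2 - 1 : ℝ) : ℂ) + (S : ℂ)
    let D : ℂ := conj (z * w) * (z + w) - (conj z + conj w)
    (1 - ‖z‖ ^ 2) * ‖D - conj w * N‖ ^ 2 = (1 - ‖w‖ ^ 2) * ‖D - conj z * N‖ ^ 2 := by
  intro N D
  have hS' := congrArg (fun x : ℝ => (x : ℂ)) hS
  apply ofReal_injective
  push_cast at hS' ⊢
  simp only [← mul_conj', map_sub, map_mul, map_one, map_add, conj_conj, conj_ofReal, N, D]
    at hS' ⊢
  push_cast
  simp only [← mul_conj', map_mul]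
  linear_combination (w * conj w - z * conj z) * hS'

theorem weighted_eq_of_eq_div {c : ℂ}
    (hS : S ^ 2 = (1 - ‖z‖ ^ 2) * (1 - ‖w‖ ^ 2) * ‖1 - conj w * z‖ ^ 2)
    (hD : conj (z * w) * (z + w) - (conj z + conj w) ≠ 0)
    (hc : c = (((‖z * w‖ ^ 2 - 1 : ℝ) : ℂ) + (S : ℂ)) /
      (conj (z * w) * (z + w) - (conj z + conj w))) :
    (1 - ‖z‖ ^ 2) * ‖1 - conj w * c‖ ^ 2 = (1 - ‖w‖ ^ 2) * ‖1 - conj z * c‖ ^ 2 := by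
  set N : ℂ := ((‖z * w‖ ^ 2 - 1 : ℝ) : ℂ) + (S : ℂ)
  set D : ℂ := conj (z * w) * (z + w) - (conj z + conj w)
  have one_sub_conj_mul_eq (a : ℂ) : 1 - conj a * c = (D - conj a * N) / D := by
    rw [hc]
    field_simp
  rw [one_sub_conj_mul_eq, one_sub_conj_mul_eq, norm_div, norm_div, div_pow, div_pow,
    mul_div_assoc', mul_div_assoc', weighted_eq_numerator z w S hS]

end Midpoint

theorem hyperbolic_midpoint_equidistant_general (z w : ℂ) (hz : ‖z‖ < 1) (hw : ‖w‖ < 1)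
    (hden : (starRingEnd ℂ) (z * w) * (z + w) - ((starRingEnd ℂ) z + (starRingEnd ℂ) w) ≠ 0) :
    let c : ℂ := ((‖z * w‖ ^ 2 - 1 : ℝ) +
      (Real.sqrt ((1 - ‖z‖ ^ 2) * (1 - ‖w‖ ^ 2) * ‖1 - (starRingEnd ℂ) w * z‖ ^ 2) : ℝ)) /
      ((starRingEnd ℂ) (z * w) * (z + w) - ((starRingEnd ℂ) z + (starRingEnd ℂ) w))
    ‖(c - z) / (1 - (starRingEnd ℂ) z * c)‖ = ‖(c - w) / (1 - (starRingEnd ℂ) w * c)‖ := by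
  intro c
  have one_sub_sq_nonneg {a : ℂ} (ha : ‖a‖ < 1) : 0 ≤ 1 - ‖a‖ ^ 2 :=
    sub_nonneg.mpr (pow_le_one₀ (norm_nonneg a) ha.le)
  have hS := Real.sq_sqrt <| mul_nonneg (mul_nonneg (one_sub_sq_nonneg hz) (one_sub_sq_nonneg hw))
    (sq_nonneg ‖1 - conj w * z‖)
  exact norm_mobius_eq_of_weighted_eq hz hw (weighted_eq_of_eq_div z w _ hS hden rfl)

theorem hyperbolic_midpoint_equidistant (z w : ℂ) (hz : ‖z‖ < 1) (hw : ‖w‖ < 1)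
    (hzw : z ≠ w)
    (hden : (starRingEnd ℂ) (z * w) * (z + w) - ((starRingEnd ℂ) z + (starRingEnd ℂ) w) ≠ 0) :
    let c : ℂ := ((‖z * w‖ ^ 2 - 1 : ℝ) +
      (Real.sqrt ((1 - ‖z‖ ^ 2) * (1 - ‖w‖ ^ 2) * ‖1 - (starRingEnd ℂ) w * z‖ ^ 2) : ℝ)) /
      ((starRingEnd ℂ) (z * w) * (z + w) - ((starRingEnd ℂ) z + (starRingEnd ℂ) w))
    ‖(c - z) / (1 - (starRingEnd ℂ) z * c)‖ = ‖(c - w) / (1 - (starRingEnd ℂ) w * c)‖ :=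
  hyperbolic_midpoint_equidistant_general z w hz hw hden
end

section
/- Let s ∈ [0,1). The only solution w in the closed unit disk of the equation s^2 w^3 + 3 conj(w) w^2 + 3 w + s^2 conj(w) = 0 with |w| < 1 is w = 0. Moreover, any nonzero solution satisfies |w| = 1. -/
/-!
Since `conj w * w ^ 2 = ‖w‖² w`, the equation reads `c (w³ + conj w) = -3 (1 + ‖w‖²) w` with
`c = s²`. The left side has norm at most `‖c‖ ‖w‖ (1 + ‖w‖²)`, the right side has norm exactly
`3 ‖w‖ (1 + ‖w‖²)`, so `‖c‖ < 3` forces `w = 0`: the equation has no nonzero solution at all.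
-/

open Complex ComplexConjugate

theorem Complex.eq_zero_of_mul_cube_add_conj_eq {c : ℂ} (hc : ‖c‖ < 3) {w : ℂ}
    (hw : c * w ^ 3 + 3 * conj w * w ^ 2 + 3 * w + c * conj w = 0) : w = 0 := by
  have hconj : conj w * w ^ 2 = ((‖w‖ ^ 2 : ℝ) : ℂ) * w := by
    rw [← normSq_eq_norm_sq, ← mul_conj]
    ring
  have hrewrite : c * (w ^ 3 + conj w) = -(3 * ((1 + ‖w‖ ^ 2 : ℝ) : ℂ)) * w := by
    push_cast at hconj ⊢
    linear_combination hw - 3 * hconj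
  have hnorm : 3 * (1 + ‖w‖ ^ 2) * ‖w‖ ≤ ‖c‖ * (‖w‖ * (1 + ‖w‖ ^ 2)) := by
    calc 3 * (1 + ‖w‖ ^ 2) * ‖w‖ = ‖c * (w ^ 3 + conj w)‖ := by
          rw [hrewrite, norm_mul, norm_neg, norm_mul, norm_real, Real.norm_of_nonneg (by positivity)]
          norm_num
      _ ≤ ‖c‖ * (‖w‖ ^ 3 + ‖w‖) := by
          rw [norm_mul, ← norm_pow, ← RCLike.norm_conj w]
          gcongr
          exact norm_add_le _ _
      _ = ‖c‖ * (‖w‖ * (1 + ‖w‖ ^ 2)) := by ring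
  have hpos : 0 < (3 - ‖c‖) * (1 + ‖w‖ ^ 2) := by
    have : 0 < 3 - ‖c‖ := by linarith
    positivity
  have : ‖w‖ ≤ 0 := by nlinarith [norm_nonneg w]
  exact norm_le_zero_iff.mp this

theorem inflection_equation_only_zero (s : ℝ) (hs0 : 0 ≤ s) (hs1 : s < 1) (w : ℂ)
    (hw : (s : ℂ) ^ 2 * w ^ 3 + 3 * (starRingEnd ℂ) w * w ^ 2 + 3 * w +
      (s : ℂ) ^ 2 * (starRingEnd ℂ) w = 0) :
    (‖w‖ < 1 → w = 0) ∧ (w ≠ 0 → ‖w‖ = 1) := by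
  have hs : ‖(s : ℂ) ^ 2‖ < 3 := by
    rw [norm_pow, norm_real, Real.norm_of_nonneg hs0]
    nlinarith
  have hw0 : w = 0 := eq_zero_of_mul_cube_add_conj_eq hs hw
  exact ⟨fun _ => hw0, fun hne => absurd hw0 hne⟩
end

section
/- Let r, s ∈ ℂ and define q(z) = (1+s) z^3 + 2(conj(sr) - sr) z^2 - 3 conj(1+s) z + 4r. Then the iterated Schur transforms satisfy: δ_1 := Tq(0) = 16|r|^2 - |1+s|^2, δ_2 := T^2 q(0) = (16|r|^2 - |1+s|^2)^2 - |3(1+s)^2 + 8 conj(r)(conj(sr) - sr)|^2, and δ_3 := T^3 q(0) = δ_2^2 - |(|1+s|^2 - 16|r|^2)(2(1+s)(sr - conj(sr)) + 12 conj(r) conj(1+s)) + (3(1+s)^2 + 8 conj(r)(conj(sr) - sr))(2 conj(1+s)(conj(sr) - sr) + 12 r(1+s))|^2. -/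
open Complex Polynomial

/-- The reciprocal polynomial of a polynomial viewed as having degree `d`:
coefficients reversed and conjugated. -/
noncomputable def recipPoly (d : ℕ) (p : Polynomial ℂ) : Polynomial ℂ :=
  ∑ k ∈ Finset.range (d + 1), Polynomial.C ((starRingEnd ℂ) (p.coeff (d - k))) * Polynomial.X ^ k

/-- The Schur transform `Tp(z) = conj(p(0)) p(z) - conj(p*(0)) p*(z)`. -/
noncomputable def schurT (d : ℕ) (p : Polynomial ℂ) : Polynomial ℂ :=
  Polynomial.C ((starRingEnd ℂ) (p.eval 0)) * p -
    Polynomial.C ((starRingEnd ℂ) ((recipPoly d p).eval 0)) * recipPoly d p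

open scoped ComplexConjugate

/-!
The constant term of a Schur transform `T_d p` is the real number `|p₀|² - |p_d|²`, so each `δ` is
the difference of the squared moduli of the extreme coefficients of the previous transform, and
the three formulas follow from the coefficients of `Tq` and `T²q`.
-/

lemma recipPoly_coeff {d k : ℕ} (hk : k ≤ d) (p : ℂ[X]) :
    (recipPoly d p).coeff k = conj (p.coeff (d - k)) := by
  simp [recipPoly, finsetSum_coeff, coeff_X_pow, Nat.lt_succ_of_le hk]

lemma schurT_coeff {d k : ℕ} (hk : k ≤ d) (p : ℂ[X]) :
    (schurT d p).coeff k = conj (p.coeff 0) * p.coeff k - p.coeff d * conj (p.coeff (d - k)) := by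
  simp [schurT, ← coeff_zero_eq_eval_zero, recipPoly_coeff hk, recipPoly_coeff d.zero_le, mul_comm]

lemma schurT_coeff_zero (d : ℕ) (p : ℂ[X]) :
    (schurT d p).coeff 0 = ((‖p.coeff 0‖ ^ 2 - ‖p.coeff d‖ ^ 2 : ℝ) : ℂ) := by
  rw [schurT_coeff d.zero_le]
  push_cast
  rw [← mul_conj', ← mul_conj', Nat.sub_zero, mul_comm (conj _)]

lemma schurT_eval_zero (d : ℕ) (p : ℂ[X]) :
    (schurT d p).eval 0 = ((‖p.coeff 0‖ ^ 2 - ‖p.coeff d‖ ^ 2 : ℝ) : ℂ) := by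
  rw [← coeff_zero_eq_eval_zero, schurT_coeff_zero]

theorem schur_cohn_deltas_degree_three (r s : ℂ) :
    let q : Polynomial ℂ := C (1 + s) * X ^ 3 +
      C (2 * ((starRingEnd ℂ) (s * r) - s * r)) * X ^ 2 -
      C (3 * (starRingEnd ℂ) (1 + s)) * X + C (4 * r)
    (schurT 3 q).eval 0 = ((16 * ‖r‖ ^ 2 - ‖1 + s‖ ^ 2 : ℝ) : ℂ) ∧
    (schurT 2 (schurT 3 q)).eval 0 =
      (((16 * ‖r‖ ^ 2 - ‖1 + s‖ ^ 2) ^ 2 -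
        ‖3 * (1 + s) ^ 2 + 8 * (starRingEnd ℂ) r * ((starRingEnd ℂ) (s * r) - s * r)‖ ^ 2 : ℝ) : ℂ) ∧
    (schurT 1 (schurT 2 (schurT 3 q))).eval 0 =
      ((((16 * ‖r‖ ^ 2 - ‖1 + s‖ ^ 2) ^ 2 -
        ‖3 * (1 + s) ^ 2 + 8 * (starRingEnd ℂ) r * ((starRingEnd ℂ) (s * r) - s * r)‖ ^ 2) ^ 2 -
        ‖(((‖1 + s‖ ^ 2 - 16 * ‖r‖ ^ 2 : ℝ) : ℂ)) *
            (2 * (1 + s) * (s * r - (starRingEnd ℂ) (s * r)) +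
              12 * (starRingEnd ℂ) r * (starRingEnd ℂ) (1 + s)) +
          (3 * (1 + s) ^ 2 + 8 * (starRingEnd ℂ) r * ((starRingEnd ℂ) (s * r) - s * r)) *
            (2 * (starRingEnd ℂ) (1 + s) * ((starRingEnd ℂ) (s * r) - s * r) +
              12 * r * (1 + s))‖ ^ 2 : ℝ) : ℂ) := by
  intro q
  obtain ⟨q0, q1, q2, q3⟩ : q.coeff 0 = 4 * r ∧ q.coeff 1 = -(3 * conj (1 + s)) ∧
      q.coeff 2 = 2 * (conj (s * r) - s * r) ∧ q.coeff 3 = 1 + s := by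
    simp only [q, coeff_add, coeff_sub, coeff_C_mul, coeff_X_pow, coeff_X, coeff_C]
    norm_num
  set b := schurT 3 q
  have b0 : b.coeff 0 = ((16 * ‖r‖ ^ 2 - ‖1 + s‖ ^ 2 : ℝ) : ℂ) := by
    rw [schurT_coeff_zero, q0, q3, norm_mul]; norm_num; ring
  have b1 : b.coeff 1 = -(2 * (1 + s) * (s * r - conj (s * r)) + 12 * conj r * conj (1 + s)) := by
    rw [schurT_coeff (by norm_num), q0, q1, q2, q3]
    simp only [map_mul, map_sub, map_ofNat, conj_conj]
    ring
  have b2 : b.coeff 2 = 3 * (1 + s) ^ 2 + 8 * conj r * (conj (s * r) - s * r) := by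
    rw [schurT_coeff (by norm_num), q0, q1, q2, q3]
    simp only [map_mul, map_neg, map_ofNat, conj_conj]
    ring
  have c1 : (schurT 2 b).coeff 1 = conj (b.coeff 0) * b.coeff 1 - b.coeff 2 * conj (b.coeff 1) :=
    schurT_coeff (by norm_num) b
  refine ⟨?_, ?_, ?_⟩
  · rw [← b0, coeff_zero_eq_eval_zero]
  · rw [schurT_eval_zero, b0, b2, norm_real, Real.norm_eq_abs, sq_abs]
  · rw [schurT_eval_zero, schurT_coeff_zero, b0, b2, c1, b0, b1, b2, conj_ofReal, norm_real,
      norm_real, Real.norm_eq_abs, Real.norm_eq_abs, sq_abs, sq_abs]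
    congr 4
    simp only [map_mul, map_add, map_sub, map_neg, map_ofNat, conj_conj]
    push_cast
    ring
end

section
/- Let p be a complex polynomial of degree d ≥ 1 all of whose roots lie on the unit circle and are simple. Then all roots of p' lie in the open unit disk 𝔻. -/
/-!
By Gauss–Lucas, a root `z` of `p'` lies in the convex hull of the roots of `p`, hence in the
closed unit disk. Points of the unit circle are extreme points of the disk, so if `|z| = 1`
then `z` must itself be a root of `p`; being also a root of `p'`, it would be a multiple root.
-/

open Polynomial Metric

theorem convexHull_inter_sphere_subset {E : Type*} [NormedAddCommGroup E] [NormedSpace ℝ E]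
    [StrictConvexSpace ℝ E] [Nontrivial E] {A : Set E} {c : E} {r : ℝ}
    (hA : A ⊆ closedBall c r) : convexHull ℝ A ∩ sphere c r ⊆ A := by
  rw [← StrictConvexSpace.extremePoints_closedBall_eq_sphere]
  exact (inter_extremePoints_subset_extremePoints_of_subset
    ((convex_closedBall c r).convexHull_subset_iff.mpr hA)).trans extremePoints_convexHull_subset

theorem deriv_roots_in_disk (p : Polynomial ℂ) (hd : 1 ≤ p.natDegree)
    (hroots : ∀ z : ℂ, p.IsRoot z → ‖z‖ = 1 ∧ p.rootMultiplicity z = 1) :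
    ∀ z : ℂ, (Polynomial.derivative p).IsRoot z → ‖z‖ < 1 := by
  intro z hz
  have hp : p ≠ 0 := ne_zero_of_natDegree_gt hd
  have hp' : derivative p ≠ 0 := fun h ↦ by
    have := derivative_eq_zero.mp h
    omega
  have mem_rootSet {q : ℂ[X]} (hq : q ≠ 0) {w : ℂ} : w ∈ q.rootSet ℂ ↔ q.IsRoot w := by
    rw [mem_rootSet_of_ne hq, coe_aeval_eq_eval, IsRoot.def]
  have hroots_disk : p.rootSet ℂ ⊆ closedBall 0 1 := fun w hw ↦ by
    simpa using (hroots w ((mem_rootSet hp).mp hw)).1.le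
  have hz_hull : z ∈ convexHull ℝ (p.rootSet ℂ) :=
    rootSet_derivative_subset_convexHull_rootSet (natDegree_pos_iff_degree_pos.mp hd)
      ((mem_rootSet hp').mpr hz)
  have hz_disk : ‖z‖ ≤ 1 := by
    simpa using (convex_closedBall (0 : ℂ) 1).convexHull_subset_iff.mpr hroots_disk hz_hull
  refine hz_disk.lt_of_ne fun hz_one ↦ ?_
  have hz_root : p.IsRoot z := (mem_rootSet hp).mp <|
    convexHull_inter_sphere_subset hroots_disk ⟨hz_hull, by simpa using hz_one⟩
  have hmult := (one_lt_rootMultiplicity_iff_isRoot hp).mpr ⟨hz_root, hz⟩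
  rw [(hroots z hz_root).2] at hmult
  exact lt_irrefl 1 hmult
end
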